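/- arXiv:1801.03655 — 2 statements merged into one kernel-verified Lean document; each statement's English description precedes it below -/
import Mathlib

section
/- Let (𝒳₁×𝒳₂, p(y|x₁,x₂), 𝒴) be a discrete memoryless multiple access channel, 𝒰 a finite set, δ > 0 with √(2δ ln 2) ≤ |𝒴|/e, and p(u,x₁,x₂) a joint pmf with I(X₁;X₂|U) ≤ δ. Let Y be the channel output under p(u,x₁,x₂), and let H_ind(Y|U) denote the conditional output entropy when the input distribution given U = u is replaced by the product p(x₁|u)p(x₂|u). Then |H(Y|U) − H_ind(Y|U)| ≤ √(2δ ln 2) · log₂(|𝒴|³ / √(2δ ln 2)). -/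
open scoped BigOperators

noncomputable section

/-- Shannon entropy (base 2) of a (sub)probability mass function on a finite type. -/
def ent2 {α : Type} [Fintype α] (p : α → ℝ) : ℝ :=
  -∑ a, p a * Real.logb 2 (p a)

/-- Conditional mutual information `I(A;B|U)` (in bits) of the joint pmf `p` on `U × A × B`,
given in curried form, computed as `H(A|U) + H(B|U) - H(A,B|U)`. -/
def condMI {U A B : Type} [Fintype U] [Fintype A] [Fintype B]
    (p : U → A → B → ℝ) : ℝ :=
  ent2 (fun ua : U × A => ∑ b, p ua.1 ua.2 b)
    + ent2 (fun ub : U × B => ∑ a, p ub.1 a ub.2)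
    - ent2 (fun uab : U × A × B => p uab.1 uab.2.1 uab.2.2)
    - ent2 (fun u : U => ∑ a, ∑ b, p u a b)

/-- `p` is a joint pmf on `U × A × B` (curried form). -/
def IsPMF3 {U A B : Type} [Fintype U] [Fintype A] [Fintype B] (p : U → A → B → ℝ) : Prop :=
  (∀ u a b, 0 ≤ p u a b) ∧ ∑ u, ∑ a, ∑ b, p u a b = 1

/-- A discrete memoryless multiple access channel with input alphabets `X1, X2` and
output alphabet `Y`. -/
structure MAC (X1 X2 Y : Type) [Fintype X1] [Fintype X2] [Fintype Y] where
  W : X1 → X2 → Y → ℝ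
  nonneg : ∀ x1 x2 y, 0 ≤ W x1 x2 y
  sum_one : ∀ x1 x2, ∑ y, W x1 x2 y = 1

variable {X1 X2 Y : Type} [Fintype X1] [Fintype X2] [Fintype Y]

/-- The set of values `(1/n) I(X₁ⁿ,X₂ⁿ;Yⁿ|U)` over all finite auxiliary alphabets `U`
(wlog `U = Fin k`) and all joint pmfs `p(u,x₁ⁿ,x₂ⁿ)` with `I(X₁ⁿ;X₂ⁿ|U) ≤ nδ`,
where `Yⁿ` is the output of the `n`-th extension of the MAC `M`. -/
def sigmaSet (M : MAC X1 X2 Y) (n : ℕ) (δ : ℝ) : Set ℝ :=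
  {r | ∃ (k : ℕ) (p : Fin k → (Fin n → X1) → (Fin n → X2) → ℝ),
    IsPMF3 p ∧ condMI p ≤ (n : ℝ) * δ ∧
    r = (1 / (n : ℝ)) *
      condMI (fun (u : Fin k) (x : (Fin n → X1) × (Fin n → X2)) (y : Fin n → Y) =>
        p u x.1 x.2 * ∏ t, M.W (x.1 t) (x.2 t) (y t)) }

/-- `σ_n(δ)`. -/
def sigmaN (M : MAC X1 X2 Y) (n : ℕ) (δ : ℝ) : ℝ := sSup (sigmaSet M n δ)

/-- `σ(δ) = lim_n σ_n(δ) = sup_n σ_n(δ)`. -/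
def sigmaF (M : MAC X1 X2 Y) (δ : ℝ) : ℝ := ⨆ n : ℕ, sigmaN M (n + 1) δ

/-- `⌊2^{nR}⌋`, the size of a message (or link) index set. -/
def msgSize (n : ℕ) (R : ℝ) : ℕ := ⌊(2 : ℝ) ^ ((n : ℝ) * R)⌋₊

/-- A `(2^{nR₁}, 2^{nR₂}, n)`-code for the MAC `M` with a
`((c1,c2),(d1,d2))`-cooperation facilitator. -/
structure Code (M : MAC X1 X2 Y) (n : ℕ) (R1 R2 c1 c2 d1 d2 : ℝ) where
  /-- encoder 1 to CF -/
  toCF1 : Fin (msgSize n R1) → Fin (msgSize n c1)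
  /-- encoder 2 to CF -/
  toCF2 : Fin (msgSize n R2) → Fin (msgSize n c2)
  /-- CF to encoder 1 -/
  cf1 : Fin (msgSize n c1) → Fin (msgSize n c2) → Fin (msgSize n d1)
  /-- CF to encoder 2 -/
  cf2 : Fin (msgSize n c1) → Fin (msgSize n c2) → Fin (msgSize n d2)
  /-- encoder 1 -/
  f1 : Fin (msgSize n R1) → Fin (msgSize n d1) → Fin n → X1
  /-- encoder 2 -/
  f2 : Fin (msgSize n R2) → Fin (msgSize n d2) → Fin n → X2
  /-- decoder -/
  dec : (Fin n → Y) → Fin (msgSize n R1) × Fin (msgSize n R2)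

/-- The error probability `λ_n(w₁,w₂)` of the code `C` on the message pair `(w₁,w₂)`. -/
def errProb {M : MAC X1 X2 Y} {n : ℕ} {R1 R2 c1 c2 d1 d2 : ℝ}
    (C : Code M n R1 R2 c1 c2 d1 d2)
    (w1 : Fin (msgSize n R1)) (w2 : Fin (msgSize n R2)) : ℝ :=
  ∑ y : Fin n → Y,
    if C.dec y ≠ (w1, w2) then
      ∏ t, M.W (C.f1 w1 (C.cf1 (C.toCF1 w1) (C.toCF2 w2)) t)
               (C.f2 w2 (C.cf2 (C.toCF1 w1) (C.toCF2 w2)) t) (y t)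
    else 0

/-- Average error probability of a code. -/
def avgErr {M : MAC X1 X2 Y} {n : ℕ} {R1 R2 c1 c2 d1 d2 : ℝ}
    (C : Code M n R1 R2 c1 c2 d1 d2) : ℝ :=
  (1 / (2 : ℝ) ^ ((n : ℝ) * (R1 + R2))) * ∑ w1, ∑ w2, errProb C w1 w2

/-- Maximal error probability of a code. -/
def maxErr {M : MAC X1 X2 Y} {n : ℕ} {R1 R2 c1 c2 d1 d2 : ℝ}
    (C : Code M n R1 R2 c1 c2 d1 d2) : ℝ :=
  sSup {e | ∃ w1 w2, e = errProb C w1 w2}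

/-- `(R₁,R₂)` is achievable under the average-error criterion for the MAC `M` with a
`((c1,c2),(d1,d2))`-CF. -/
def AchievableAvg (M : MAC X1 X2 Y) (c1 c2 d1 d2 : ℝ) (R : ℝ × ℝ) : Prop :=
  0 ≤ R.1 ∧ 0 ≤ R.2 ∧
  ∃ C : (n : ℕ) → Code M (n + 1) R.1 R.2 c1 c2 d1 d2,
    Filter.Tendsto (fun n => avgErr (C n)) Filter.atTop (nhds 0)

/-- `(R₁,R₂)` is achievable under the maximal-error criterion. -/
def AchievableMax (M : MAC X1 X2 Y) (c1 c2 d1 d2 : ℝ) (R : ℝ × ℝ) : Prop :=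
  0 ≤ R.1 ∧ 0 ≤ R.2 ∧
  ∃ C : (n : ℕ) → Code M (n + 1) R.1 R.2 c1 c2 d1 d2,
    Filter.Tendsto (fun n => maxErr (C n)) Filter.atTop (nhds 0)

/-- Average-error sum-capacity `C_sum,avg(C_in, C_out)`. -/
def CsumAvg (M : MAC X1 X2 Y) (Cin Cout : ℝ × ℝ) : ℝ :=
  sSup {s | ∃ R ∈ closure {R : ℝ × ℝ | AchievableAvg M Cin.1 Cin.2 Cout.1 Cout.2 R},
    s = R.1 + R.2}

/-- Maximal-error sum-capacity `C_sum,max(C_in, C_out)`. -/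
def CsumMax (M : MAC X1 X2 Y) (Cin Cout : ℝ × ℝ) : ℝ :=
  sSup {s | ∃ R ∈ closure {R : ℝ × ℝ | AchievableMax M Cin.1 Cin.2 Cout.1 Cout.2 R},
    s = R.1 + R.2}

/-- `max_{p(x₁,x₂)} I(X₁,X₂;Y)`, used to specify when CF input links are large enough
that the CF has full knowledge of both messages. -/
def maxMI (M : MAC X1 X2 Y) : ℝ :=
  sSup {r | ∃ p : X1 × X2 → ℝ, (∀ x, 0 ≤ p x) ∧ (∑ x, p x = 1) ∧
    r = condMI (fun (_ : Unit) (x : X1 × X2) (y : Y) => p x * M.W x.1 x.2 y)}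

end

/-- `p(u)`, the marginal of `U` under the joint pmf `p(u,x₁,x₂)`. -/
noncomputable def margU {U X1 X2 : Type} [Fintype U] [Fintype X1] [Fintype X2]
    (p : U → X1 → X2 → ℝ) (u : U) : ℝ :=
  ∑ x1, ∑ x2, p u x1 x2

/-- `p(y|u) = ∑_{x₁,x₂} p(x₁,x₂|u) p(y|x₁,x₂)`. -/
noncomputable def outCond {U X1 X2 Y : Type} [Fintype U] [Fintype X1] [Fintype X2] [Fintype Y]
    (M : MAC X1 X2 Y) (p : U → X1 → X2 → ℝ) (u : U) (y : Y) : ℝ :=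
  ∑ x1, ∑ x2, (p u x1 x2 / margU p u) * M.W x1 x2 y

/-- `p_ind(y|u) = ∑_{x₁,x₂} p(x₁|u)p(x₂|u) p(y|x₁,x₂)`. -/
noncomputable def outCondInd {U X1 X2 Y : Type} [Fintype U] [Fintype X1] [Fintype X2] [Fintype Y]
    (M : MAC X1 X2 Y) (p : U → X1 → X2 → ℝ) (u : U) (y : Y) : ℝ :=
  ∑ x1, ∑ x2,
    ((∑ b, p u x1 b) / margU p u) * ((∑ a, p u a x2) / margU p u) * M.W x1 x2 y

/-- `H(Y|U) = −∑_u p(u) ∑_y p(y|u) log₂ p(y|u)` for a conditional output pmf `q(y|u)`. -/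
noncomputable def condOutEnt {U X1 X2 Y : Type} [Fintype U] [Fintype X1] [Fintype X2] [Fintype Y]
    (p : U → X1 → X2 → ℝ) (q : U → Y → ℝ) : ℝ :=
  -∑ u, margU p u * ∑ y, q u y * Real.logb 2 (q u y)

/-! The laws `p(y|u)` and `p_ind(y|u)` are the images of `p(x₁,x₂|u)` and `p(x₁|u)p(x₂|u)` under
the same channel, and a channel contracts the `ℓ¹` distance. Averaged against `p(u)`, their `ℓ¹`
distance `T` is therefore at most the `ℓ¹` distance between the joint pmf `p(u,x₁,x₂)` and
`p(u)p(x₁|u)p(x₂|u)`, and by Pinsker's inequality `T² ≤ 2 ln 2 · I(X₁;X₂|U) ≤ s²`, `s = √(2δ ln 2)`.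
Entropy is `ℓ¹`-continuous: `ln 2 · |H(q) - H(q')| ≤ t ln |𝒴| - t ln t + t` with `t = ‖q - q'‖₁`.
Replacing `-t ln t` by its tangent line at `s` makes this bound affine in `t`, so it survives
averaging over `u` and can then be evaluated at `T ≤ s`. -/

open Real InformationTheory Finset

lemma hasDerivAt_log_sub_pade {x : ℝ} (hx : 0 < x) :
    HasDerivAt (fun t => log t - (t - 1) * (5 * t + 1) / (2 * t * (t + 2)))
      ((x - 1) ^ 3 / (x ^ 2 * (x + 2) ^ 2)) x := by
  have hnum : HasDerivAt (fun t => (t - 1) * (5 * t + 1)) (10 * x - 4) x :=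
    (((hasDerivAt_id x).sub_const 1).mul
      (((hasDerivAt_id x).const_mul 5).add_const 1)).congr_deriv (by simp only [id]; ring)
  have hden : HasDerivAt (fun t => 2 * t * (t + 2)) (4 * x + 4) x :=
    (((hasDerivAt_id x).const_mul 2).mul ((hasDerivAt_id x).add_const 2)).congr_deriv
      (by simp only [id]; ring)
  refine ((hasDerivAt_log hx.ne').sub (hnum.div hden (by positivity))).congr_deriv ?_
  field_simp
  ring

lemma pade_le_log {x : ℝ} (hx : 0 < x) :
    (x - 1) * (5 * x + 1) / (2 * x * (x + 2)) ≤ log x := by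
  set f : ℝ → ℝ := fun t => log t - (t - 1) * (5 * t + 1) / (2 * t * (t + 2))
  set f' : ℝ → ℝ := fun t => (t - 1) ^ 3 / (t ^ 2 * (t + 2) ^ 2)
  have hf : ∀ t > 0, HasDerivAt f (f' t) t := fun t ht => hasDerivAt_log_sub_pade ht
  have hcont : ContinuousOn f (Set.Ioi 0) :=
    fun t ht => (hf t ht).continuousAt.continuousWithinAt
  suffices f 1 ≤ f x by simpa [f] using this
  rcases le_total 1 x with h1 | h1
  · refine monotoneOn_of_hasDerivWithinAt_nonneg (f' := f') (convex_Ici 1)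
      (hcont.mono fun t (ht : 1 ≤ t) => zero_lt_one.trans_le ht) (fun t ht => ?_)
      (fun t ht => ?_) Set.self_mem_Ici h1 h1
    all_goals rw [interior_Ici] at ht
    · exact (hf t (zero_lt_one.trans ht)).hasDerivWithinAt
    · have : 0 ≤ t - 1 := by linarith [Set.mem_Ioi.1 ht]
      positivity
  · refine antitoneOn_of_hasDerivWithinAt_nonpos (f' := f') (convex_Ioc 0 1)
      (hcont.mono Set.Ioc_subset_Ioi_self) (fun t ht => ?_) (fun t ht => ?_)
      ⟨hx, h1⟩ (Set.right_mem_Ioc.2 zero_lt_one) h1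
    all_goals rw [interior_Ioc] at ht
    · exact (hf t ht.1).hasDerivWithinAt
    · exact div_nonpos_of_nonpos_of_nonneg ((Odd.pow_nonpos_iff (by decide)).2
        (by linarith [ht.2])) (by positivity)

lemma three_mul_sq_le_klFun {x : ℝ} (hx : 0 ≤ x) :
    3 * (x - 1) ^ 2 ≤ 2 * (x + 2) * klFun x := by
  rcases hx.eq_or_lt with rfl | hx
  · norm_num [klFun]
  have h := mul_le_mul_of_nonneg_left (pade_le_log hx) (by positivity : 0 ≤ 2 * x * (x + 2))
  rw [mul_div_cancel₀ _ (by positivity)] at h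
  rw [klFun_apply]
  nlinarith

theorem pinsker_inequality {ι : Type*} [Fintype ι] (P Q : ι → ℝ) (hP : ∀ i, 0 ≤ P i)
    (hQ : ∀ i, 0 ≤ Q i) (hPQ : ∀ i, Q i = 0 → P i = 0) (hsum : ∑ i, P i = ∑ i, Q i) :
    (∑ i, |P i - Q i|) ^ 2 ≤ 2 * (∑ i, P i) * ∑ i, P i * log (P i / Q i) := by
  have hkl : ∀ i, Q i * klFun (P i / Q i) = P i * log (P i / Q i) + Q i - P i := by
    intro i
    rcases (hQ i).eq_or_lt with h | h
    · simp [← h, hPQ i h.symm]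
    · rw [klFun_apply]
      field_simp
  -- Cauchy–Schwarz with weights `P + 2Q`, whose total mass is `3 ∑ P`
  have hpt : ∀ i, |P i - Q i| ^ 2 ≤ (P i + 2 * Q i) * (2 / 3 * (Q i * klFun (P i / Q i))) := by
    intro i
    rcases (hQ i).eq_or_lt with h | h
    · simp [← h, hPQ i h.symm]
    · have := mul_le_mul_of_nonneg_left (three_mul_sq_le_klFun (div_nonneg (hP i) h.le))
        (sq_nonneg (Q i))
      rw [sq_abs]
      field_simp at this
      nlinarith
  calc (∑ i, |P i - Q i|) ^ 2
      ≤ (∑ i, (P i + 2 * Q i)) * ∑ i, 2 / 3 * (Q i * klFun (P i / Q i)) :=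
        sum_sq_le_sum_mul_sum_of_sq_le_mul _
          (fun i _ => by linarith [hP i, hQ i])
          (fun i _ => mul_nonneg (by norm_num)
            (mul_nonneg (hQ i) (klFun_nonneg (div_nonneg (hP i) (hQ i)))))
          (fun i _ => hpt i)
    _ = 2 * (∑ i, P i) * ∑ i, P i * log (P i / Q i) := by
        simp only [hkl, ← mul_sum, sum_add_distrib, sum_sub_distrib, hsum]
        ring

lemma negMulLog_le_sub_sub_mul_log {x a : ℝ} (hx : 0 ≤ x) (ha : 0 < a) :
    negMulLog x ≤ a - x - x * log a := by
  have h := negMulLog_mul a (x / a)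
  rw [mul_div_cancel₀ _ ha.ne'] at h
  have h1 := mul_le_mul_of_nonneg_left (negMulLog_le_one_sub_self (div_nonneg hx ha.le)) ha.le
  rw [h, negMulLog]
  field_simp at h1 ⊢
  nlinarith

lemma negMulLog_add_le {x y : ℝ} (hx : 0 ≤ x) (hy : 0 ≤ y) :
    negMulLog (x + y) ≤ negMulLog x + negMulLog y := by
  have key : ∀ {a b : ℝ}, 0 ≤ a → 0 ≤ b → a * log a ≤ a * log (a + b) := by
    intro a b ha hb
    rcases ha.eq_or_lt with rfl | ha
    · simp
    · exact mul_le_mul_of_nonneg_left (log_le_log ha (by linarith)) ha.le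
  simp only [negMulLog_eq_neg]
  linarith [key hx hy, add_comm x y ▸ key hy hx]

lemma abs_negMulLog_sub_le {x y : ℝ} (hx : 0 ≤ x) (hx1 : x ≤ 1) (hy : 0 ≤ y) (hy1 : y ≤ 1) :
    |negMulLog x - negMulLog y| ≤ negMulLog |x - y| + |x - y| := by
  wlog hxy : x ≤ y generalizing x y
  · rw [abs_sub_comm, abs_sub_comm x]
    exact this hy hy1 hx hx1 (le_of_not_ge hxy)
  obtain ⟨d, hd, rfl⟩ : ∃ d, 0 ≤ d ∧ y = x + d := ⟨y - x, by linarith, by ring⟩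
  rw [show x - (x + d) = -d by ring, abs_neg, abs_of_nonneg hd]
  have hdd : 0 ≤ negMulLog d := negMulLog_nonneg hd (by linarith)
  have hup : negMulLog x ≤ negMulLog (x + d) + d := by
    rcases hy.eq_or_lt with h | h
    · rw [show x = 0 by linarith, show d = 0 by linarith]; simp
    have htangent := negMulLog_le_sub_sub_mul_log hx h
    have hlog : d * log (x + d) ≤ 0 := mul_nonpos_of_nonneg_of_nonpos hd (log_nonpos hy hy1)
    simp only [negMulLog_eq_neg] at *
    nlinarith
  rw [abs_sub_le_iff]
  constructor <;> linarith [negMulLog_add_le hx hd]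

lemma sum_negMulLog_le {ι : Type*} [Fintype ι] (d : ι → ℝ) (hd : ∀ i, 0 ≤ d i) :
    ∑ i, negMulLog (d i) ≤ (∑ i, d i) * log (Fintype.card ι) + negMulLog (∑ i, d i) := by
  set t := ∑ i, d i
  rcases (sum_nonneg fun i _ => hd i : 0 ≤ t).eq_or_lt with ht | ht
  · have : ∀ i, d i = 0 := fun i => (sum_eq_zero_iff_of_nonneg fun i _ => hd i).1 ht.symm i
      (mem_univ i)
    simp [t, this]
  have hn : (0 : ℝ) < Fintype.card ι := by
    obtain ⟨i, -⟩ := exists_ne_zero_of_sum_ne_zero ht.ne'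
    exact_mod_cast Fintype.card_pos_iff.2 ⟨i⟩
  -- tangent line of the concave `negMulLog` at the uniform value `t / card ι`
  calc ∑ i, negMulLog (d i)
      ≤ ∑ i, (t / Fintype.card ι - d i - d i * log (t / Fintype.card ι)) :=
        sum_le_sum fun i _ => negMulLog_le_sub_sub_mul_log (hd i) (by positivity)
    _ = t * log (Fintype.card ι) + negMulLog t := by
        rw [sum_sub_distrib, sum_sub_distrib, ← sum_mul, sum_const, card_univ, nsmul_eq_mul,
          log_div ht.ne' hn.ne', negMulLog]
        field_simp
        ring

theorem abs_sum_negMulLog_sub_le {ι : Type*} [Fintype ι] (q q' : ι → ℝ)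
    (hq : ∀ i, q i ∈ Set.Icc 0 1) (hq' : ∀ i, q' i ∈ Set.Icc 0 1) {s : ℝ} (hs : 0 < s) :
    |∑ i, negMulLog (q i) - ∑ i, negMulLog (q' i)| ≤
      (∑ i, |q i - q' i|) * (log (Fintype.card ι) - log s) + s := by
  set t := ∑ i, |q i - q' i|
  calc |∑ i, negMulLog (q i) - ∑ i, negMulLog (q' i)|
      ≤ ∑ i, |negMulLog (q i) - negMulLog (q' i)| := by
        rw [← sum_sub_distrib]; exact abs_sum_le_sum_abs _ _
    _ ≤ ∑ i, (negMulLog |q i - q' i| + |q i - q' i|) :=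
        sum_le_sum fun i _ => abs_negMulLog_sub_le (hq i).1 (hq i).2 (hq' i).1 (hq' i).2
    _ ≤ t * log (Fintype.card ι) + negMulLog t + t := by
        rw [sum_add_distrib]
        gcongr
        exact sum_negMulLog_le _ fun i => abs_nonneg _
    _ ≤ t * (log (Fintype.card ι) - log s) + s := by
        linarith [negMulLog_le_sub_sub_mul_log (sum_nonneg fun i _ => abs_nonneg _ : 0 ≤ t) hs]

namespace MAC

variable {X1 X2 Y : Type} [Fintype X1] [Fintype X2] [Fintype Y] (M : MAC X1 X2 Y)

lemma sum_output (r : X1 → X2 → ℝ) :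
    ∑ y, ∑ a, ∑ b, r a b * M.W a b y = ∑ a, ∑ b, r a b := by
  rw [sum_comm]
  refine sum_congr rfl fun a _ => ?_
  rw [sum_comm]
  simp only [← mul_sum, M.sum_one, mul_one]

lemma sum_abs_output_le (d : X1 → X2 → ℝ) :
    ∑ y, |∑ a, ∑ b, d a b * M.W a b y| ≤ ∑ a, ∑ b, |d a b| :=
  calc ∑ y, |∑ a, ∑ b, d a b * M.W a b y|
      ≤ ∑ y, ∑ a, ∑ b, |d a b| * M.W a b y := by
        gcongr with y
        refine (abs_sum_le_sum_abs _ _).trans (sum_le_sum fun a _ => ?_)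
        refine (abs_sum_le_sum_abs _ _).trans_eq (sum_congr rfl fun b _ => ?_)
        rw [abs_mul, abs_of_nonneg (M.nonneg a b y)]
    _ = ∑ a, ∑ b, |d a b| := M.sum_output _

end MAC

section

variable {U X1 X2 Y : Type} [Fintype U] [Fintype X1] [Fintype X2] [Fintype Y]

/-- `p(u) p(x₁|u) p(x₂|u)`. -/
noncomputable def condIndepPMF (p : U → X1 → X2 → ℝ) (u : U) (a : X1) (b : X2) : ℝ :=
  (∑ b', p u a b') * (∑ a', p u a' b) / margU p u

lemma margU_nonneg {p : U → X1 → X2 → ℝ} (hp : ∀ u a b, 0 ≤ p u a b) (u : U) :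
    0 ≤ margU p u :=
  sum_nonneg fun a _ => sum_nonneg fun b _ => hp u a b

lemma condIndepPMF_nonneg {p : U → X1 → X2 → ℝ} (hp : ∀ u a b, 0 ≤ p u a b) (u : U) (a : X1)
    (b : X2) : 0 ≤ condIndepPMF p u a b :=
  div_nonneg (mul_nonneg (sum_nonneg fun b' _ => hp u a b') (sum_nonneg fun a' _ => hp u a' b))
    (margU_nonneg hp u)

lemma sum_sum_condIndepPMF (p : U → X1 → X2 → ℝ) (u : U) :
    ∑ a, ∑ b, condIndepPMF p u a b = margU p u := by
  simp only [condIndepPMF, ← sum_div, ← sum_mul_sum]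
  rw [sum_comm (f := fun a b => p u b a)]
  exact mul_self_div_self _

lemma eq_zero_of_condIndepPMF_eq_zero {p : U → X1 → X2 → ℝ} (hp : ∀ u a b, 0 ≤ p u a b)
    {u : U} {a : X1} {b : X2} (h : condIndepPMF p u a b = 0) : p u a b = 0 := by
  have hpa : p u a b ≤ ∑ b', p u a b' := single_le_sum (fun b' _ => hp u a b') (mem_univ b)
  have hpb : p u a b ≤ ∑ a', p u a' b := single_le_sum (fun a' _ => hp u a' b) (mem_univ a)
  have hm : ∑ b', p u a b' ≤ margU p u :=
    single_le_sum (f := fun a => ∑ b, p u a b) (fun a _ => sum_nonneg fun b _ => hp u a b)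
      (mem_univ a)
  rcases div_eq_zero_iff.1 h with h | h
  · rcases mul_eq_zero.1 h with h | h <;> linarith [hp u a b]
  · linarith [hp u a b]

lemma log_two_mul_ent2 {α : Type} [Fintype α] (f : α → ℝ) :
    log 2 * ent2 f = ∑ x, negMulLog (f x) := by
  simp only [ent2, logb, mul_neg, mul_sum, negMulLog]
  rw [← sum_neg_distrib]
  refine sum_congr rfl fun x _ => ?_
  field_simp

lemma log_two_mul_condMI {p : U → X1 → X2 → ℝ} (hp : ∀ u a b, 0 ≤ p u a b) :
    log 2 * condMI p = ∑ u, ∑ a, ∑ b, p u a b * log (p u a b / condIndepPMF p u a b) := by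
  have hlog : ∀ u a b, p u a b * log (p u a b / condIndepPMF p u a b) =
      p u a b * log (p u a b) + p u a b * log (margU p u)
        - p u a b * log (∑ b', p u a b') - p u a b * log (∑ a', p u a' b) := by
    intro u a b
    rcases (hp u a b).eq_or_lt with h | h
    · simp [← h]
    have hq : condIndepPMF p u a b ≠ 0 := fun hq => h.ne' (eq_zero_of_condIndepPMF_eq_zero hp hq)
    simp only [condIndepPMF, ne_eq, div_eq_zero_iff, mul_eq_zero, not_or] at hq
    rw [condIndepPMF, log_div h.ne' (by simp [hq]), log_div (by simp [hq]) hq.2,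
      log_mul hq.1.1 hq.1.2]
    ring
  simp only [hlog, sum_add_distrib, sum_sub_distrib, condMI, mul_sub, mul_add, log_two_mul_ent2,
    Fintype.sum_prod_type, negMulLog_eq_neg, sum_neg_distrib, ← sum_mul]
  rw [sum_congr rfl fun u _ => sum_comm (f := fun a b => p u a b * log (∑ a', p u a' b))]
  simp only [← sum_mul, margU]
  ring

variable (M : MAC X1 X2 Y)

lemma margU_mul_outCond {p : U → X1 → X2 → ℝ} (hp : ∀ u a b, 0 ≤ p u a b) (u : U) (y : Y) :
    margU p u * outCond M p u y = ∑ a, ∑ b, p u a b * M.W a b y := by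
  by_cases hm : margU p u = 0
  · have h0 : ∀ a b, p u a b = 0 := fun a b =>
      (sum_eq_zero_iff_of_nonneg fun b _ => hp u a b).1
        ((sum_eq_zero_iff_of_nonneg fun a _ => sum_nonneg fun b _ => hp u a b).1 hm a
          (mem_univ a)) b (mem_univ b)
    simp [hm, h0]
  · simp only [outCond, mul_sum]
    refine sum_congr rfl fun a _ => sum_congr rfl fun b _ => ?_
    field_simp

lemma margU_mul_outCondInd (p : U → X1 → X2 → ℝ) (u : U) (y : Y) :
    margU p u * outCondInd M p u y = ∑ a, ∑ b, condIndepPMF p u a b * M.W a b y := by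
  by_cases hm : margU p u = 0
  · simp [outCondInd, condIndepPMF, hm]
  · rw [outCondInd, mul_sum]
    refine sum_congr rfl fun a _ => ?_
    rw [mul_sum]
    refine sum_congr rfl fun b _ => ?_
    rw [condIndepPMF]
    field_simp

lemma margU_mul_sum_abs_sub_le {p : U → X1 → X2 → ℝ} (hp : ∀ u a b, 0 ≤ p u a b) (u : U) :
    margU p u * ∑ y, |outCond M p u y - outCondInd M p u y| ≤
      ∑ a, ∑ b, |p u a b - condIndepPMF p u a b| :=
  calc margU p u * ∑ y, |outCond M p u y - outCondInd M p u y|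
      = ∑ y, |margU p u * outCond M p u y - margU p u * outCondInd M p u y| := by
        rw [mul_sum]
        refine sum_congr rfl fun y _ => ?_
        rw [← mul_sub, abs_mul, abs_of_nonneg (margU_nonneg hp u)]
    _ = ∑ y, |∑ a, ∑ b, (p u a b - condIndepPMF p u a b) * M.W a b y| := by
        simp only [margU_mul_outCond M hp, margU_mul_outCondInd, ← sum_sub_distrib, sub_mul]
    _ ≤ ∑ a, ∑ b, |p u a b - condIndepPMF p u a b| := M.sum_abs_output_le _

theorem sq_sum_margU_mul_sum_abs_sub_le {p : U → X1 → X2 → ℝ} (hp : IsPMF3 p) :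
    (∑ u, margU p u * ∑ y, |outCond M p u y - outCondInd M p u y|) ^ 2 ≤
      2 * log 2 * condMI p := by
  have hpinsker := pinsker_inequality (fun x : U × X1 × X2 => p x.1 x.2.1 x.2.2)
    (fun x => condIndepPMF p x.1 x.2.1 x.2.2) (fun x => hp.1 _ _ _)
    (fun x => condIndepPMF_nonneg hp.1 _ _ _) (fun x => eq_zero_of_condIndepPMF_eq_zero hp.1)
    (by simp only [Fintype.sum_prod_type, sum_sum_condIndepPMF]; rfl)
  simp only [Fintype.sum_prod_type, hp.2, ← log_two_mul_condMI hp.1] at hpinsker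
  refine (pow_le_pow_left₀ (sum_nonneg fun u _ => mul_nonneg (margU_nonneg hp.1 u)
    (sum_nonneg fun y _ => abs_nonneg _)) (sum_le_sum fun u _ => margU_mul_sum_abs_sub_le M hp.1 u)
    2).trans ?_
  linarith

lemma sum_outCond (p : U → X1 → X2 → ℝ) (u : U) :
    ∑ y, outCond M p u y = margU p u / margU p u := by
  simp only [outCond, M.sum_output, ← sum_div]
  rfl

lemma sum_outCondInd (p : U → X1 → X2 → ℝ) (u : U) :
    ∑ y, outCondInd M p u y = margU p u / margU p u := by
  simp only [outCondInd, M.sum_output, ← sum_mul_sum, ← sum_div]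
  rw [sum_comm (f := fun a b => p u b a)]
  change margU p u / margU p u * (margU p u / margU p u) = _
  rcases eq_or_ne (margU p u) 0 with h | h <;> simp [h]

lemma outCond_mem_Icc {p : U → X1 → X2 → ℝ} (hp : ∀ u a b, 0 ≤ p u a b) (u : U) (y : Y) :
    outCond M p u y ∈ Set.Icc 0 1 := by
  have h0 : ∀ y, 0 ≤ outCond M p u y := fun y => sum_nonneg fun a _ => sum_nonneg fun b _ =>
    mul_nonneg (div_nonneg (hp u a b) (margU_nonneg hp u)) (M.nonneg a b y)
  refine ⟨h0 y, (single_le_sum (fun y _ => h0 y) (mem_univ y)).trans ?_⟩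
  rw [sum_outCond]
  exact div_self_le_one _

lemma outCondInd_mem_Icc {p : U → X1 → X2 → ℝ} (hp : ∀ u a b, 0 ≤ p u a b) (u : U) (y : Y) :
    outCondInd M p u y ∈ Set.Icc 0 1 := by
  have hm := margU_nonneg hp u
  have h0 : ∀ y, 0 ≤ outCondInd M p u y := fun y => sum_nonneg fun a _ => sum_nonneg fun b _ =>
    mul_nonneg (mul_nonneg (div_nonneg (sum_nonneg fun b' _ => hp u a b') hm)
      (div_nonneg (sum_nonneg fun a' _ => hp u a' b) hm)) (M.nonneg a b y)
  refine ⟨h0 y, (single_le_sum (fun y _ => h0 y) (mem_univ y)).trans ?_⟩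
  rw [sum_outCondInd]
  exact div_self_le_one _

lemma sum_abs_outCond_sub_eq_zero_of_card_eq_one (h : Fintype.card Y = 1)
    (p : U → X1 → X2 → ℝ) (u : U) : ∑ y, |outCond M p u y - outCondInd M p u y| = 0 := by
  obtain ⟨y₀, hy₀⟩ := Fintype.card_eq_one_iff.1 h
  have hsum : ∀ f : Y → ℝ, ∑ y, f y = f y₀ := fun f =>
    Fintype.sum_eq_single y₀ fun y hy => (hy (hy₀ y)).elim
  have := (sum_outCond M p u).trans (sum_outCondInd M p u).symm
  rw [hsum, hsum] at this
  rw [hsum, this, sub_self, abs_zero]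

lemma log_two_mul_condOutEnt (p : U → X1 → X2 → ℝ) (q : U → Y → ℝ) :
    log 2 * condOutEnt p q = ∑ u, margU p u * ∑ y, negMulLog (q u y) := by
  simp only [condOutEnt, logb, negMulLog, mul_neg, mul_sum, ← sum_neg_distrib]
  refine sum_congr rfl fun u _ => sum_congr rfl fun y _ => ?_
  field_simp

theorem log_two_mul_abs_condOutEnt_sub_le {p : U → X1 → X2 → ℝ} (hp : IsPMF3 p)
    (q q' : U → Y → ℝ) (hq : ∀ u y, q u y ∈ Set.Icc 0 1) (hq' : ∀ u y, q' u y ∈ Set.Icc 0 1)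
    {s : ℝ} (hs : 0 < s) :
    log 2 * |condOutEnt p q - condOutEnt p q'| ≤
      (∑ u, margU p u * ∑ y, |q u y - q' u y|) * (log (Fintype.card Y) - log s) + s := by
  have hm := margU_nonneg hp.1
  calc log 2 * |condOutEnt p q - condOutEnt p q'|
      = |∑ u, margU p u * (∑ y, negMulLog (q u y) - ∑ y, negMulLog (q' u y))| := by
        rw [← abs_of_pos (log_pos one_lt_two), ← abs_mul, mul_sub, log_two_mul_condOutEnt,
          log_two_mul_condOutEnt, ← sum_sub_distrib]
        simp only [mul_sub]
    _ ≤ ∑ u, margU p u * |∑ y, negMulLog (q u y) - ∑ y, negMulLog (q' u y)| :=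
        (abs_sum_le_sum_abs _ _).trans_eq (sum_congr rfl fun u _ => by
          rw [abs_mul, abs_of_nonneg (hm u)])
    _ ≤ ∑ u, margU p u * ((∑ y, |q u y - q' u y|) * (log (Fintype.card Y) - log s) + s) :=
        sum_le_sum fun u _ => mul_le_mul_of_nonneg_left
          (abs_sum_negMulLog_sub_le _ _ (hq u) (hq' u) hs) (hm u)
    _ = (∑ u, margU p u * ∑ y, |q u y - q' u y|) * (log (Fintype.card Y) - log s) + s := by
        simp only [mul_add, sum_add_distrib, ← sum_mul, ← mul_assoc]
        rw [show ∑ u, margU p u = 1 from hp.2, one_mul]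

end

lemma mul_log_sub_add_le {n : ℕ} {s T : ℝ} (hs : 0 < s) (hsn : s ≤ n / exp 1)
    (hTs : T ≤ s) (hn : n = 1 → T = 0) :
    T * (log n - log s) + s ≤ log 2 * (s * logb 2 (n ^ 3 / s)) := by
  have hn0 : (0 : ℝ) < n := (div_pos_iff_of_pos_right (exp_pos 1)).1 (hs.trans_le hsn)
  have hlog : log s ≤ log n :=
    log_le_log hs (hsn.trans (div_le_self hn0.le (one_le_exp zero_le_one)))
  have hrhs : log 2 * (s * logb 2 (n ^ 3 / s)) = s * (3 * log n - log s) := by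
    rw [logb, log_div (by positivity) hs.ne', log_pow]
    field_simp
    push_cast
    ring
  rw [hrhs]
  obtain rfl | hn2 : n = 1 ∨ 2 ≤ n := by
    have : n ≠ 0 := by rintro rfl; simp at hn0
    omega
  · -- here `s ≤ 1 / e` is exactly what makes `s ≤ s log (1 / s)`
    have hs1 : log s ≤ -1 := by
      rw [← log_exp (-1)]
      exact log_le_log hs (by simpa [exp_neg] using hsn)
    rw [hn rfl]
    simp only [Nat.cast_one, log_one]
    nlinarith
  · have hlog2 : log 2 ≤ log n := log_le_log two_pos (by exact_mod_cast hn2)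
    nlinarith [mul_le_mul_of_nonneg_right hTs (sub_nonneg.2 hlog), log_two_gt_d9]

/-- If `I(X₁;X₂|U) ≤ δ` (in bits), `δ > 0`, and `√(2δ ln 2) ≤ |𝒴|/e`,
then `|H(Y|U) − H_ind(Y|U)| ≤ √(2δ ln 2) · log₂(|𝒴|³/√(2δ ln 2))`. -/
theorem condOutputEntropy_diff_bound
    {U X1 X2 Y : Type} [Fintype U] [Fintype X1] [Fintype X2] [Fintype Y]
    (M : MAC X1 X2 Y) (δ : ℝ) (hδ : 0 < δ)
    (hsmall : Real.sqrt (2 * δ * Real.log 2) ≤ (Fintype.card Y : ℝ) / Real.exp 1)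
    (p : U → X1 → X2 → ℝ) (hp : IsPMF3 p) (hMI : condMI p ≤ δ) :
    |condOutEnt p (outCond M p) - condOutEnt p (outCondInd M p)| ≤
      Real.sqrt (2 * δ * Real.log 2) *
        Real.logb 2 ((Fintype.card Y : ℝ) ^ 3 / Real.sqrt (2 * δ * Real.log 2)) := by
  set s := √(2 * δ * log 2)
  have hs : 0 < s := by positivity
  set T := ∑ u, margU p u * ∑ y, |outCond M p u y - outCondInd M p u y|
  have hT0 : 0 ≤ T :=
    sum_nonneg fun u _ => mul_nonneg (margU_nonneg hp.1 u) (sum_nonneg fun _ _ => abs_nonneg _)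
  have hTs : T ≤ s := (le_sqrt hT0 (by positivity)).2 <|
    (sq_sum_margU_mul_sum_abs_sub_le M hp).trans (by nlinarith [log_pos one_lt_two])
  have hY : Fintype.card Y = 1 → T = 0 := fun h =>
    sum_eq_zero fun u _ => by rw [sum_abs_outCond_sub_eq_zero_of_card_eq_one M h, mul_zero]
  refine le_of_mul_le_mul_left ?_ (log_pos one_lt_two)
  exact (log_two_mul_abs_condOutEnt_sub_le hp _ _ (outCond_mem_Icc M hp.1)
    (outCondInd_mem_Icc M hp.1) hs).trans (mul_log_sub_add_le hs hsmall hTs hY)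
end

section
/- For any discrete memoryless multiple access channel, any C_in¹ ≥ 0, and any C_out = (C_out¹, C_out²) ∈ ℝ²_{≥0}, one has C_sum,avg((C_in¹, 0), C_out) ≤ C_sum,avg((0,0),(0,0)) + min{C_in¹, C_out²}; consequently C_out² ↦ C_sum,avg((C_in¹,0),(0,C_out²)) is continuous at C_out² = 0. -/
open scoped BigOperators

/-!
With `C_in² = 0` the facilitator's message to encoder 2 is a function of `w₁` alone with at most
`2^{n min(C_in¹, C_out²)}` values, and encoder 1 can compute its own facilitator message. By
Markov's inequality three quarters of encoder 1's messages have at most four times the average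
error, and by pigeonhole one fiber of the facilitator's map contains
`2^{n(R₁ - min(C_in¹, C_out²) - η)}` of them. Restricting encoder 1 to these messages and
hard-wiring the fiber's facilitator message into encoder 2 gives a code without facilitator whose
average error is at most eight times the original one. Continuity at `C_out² = 0` then follows by
squeezing between `C_sum,avg((0,0),(0,0))` and `C_sum,avg((0,0),(0,0)) + C_out²`. Counting
correctly decoded message pairs bounds all sum rates by `log |Y|`, so the suprema are genuine.
-/

open Finset Filter Topology

variable {X1 X2 Y : Type} [Fintype X1] [Fintype X2] [Fintype Y]

section MsgSize

lemma msgSize_zero (n : ℕ) : msgSize n 0 = 1 := by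
  simp [msgSize]

instance (n : ℕ) : Unique (Fin (msgSize n 0)) :=
  msgSize_zero n ▸ inferInstanceAs (Unique (Fin 1))

lemma msgSize_mono (n : ℕ) : Monotone (msgSize n) := fun _ _ h =>
  Nat.floor_mono <| Real.rpow_le_rpow_of_exponent_le one_le_two <|
    mul_le_mul_of_nonneg_left h n.cast_nonneg

lemma msgSize_le_rpow (n : ℕ) (R : ℝ) : (msgSize n R : ℝ) ≤ 2 ^ ((n : ℝ) * R) :=
  Nat.floor_le (by positivity)

lemma one_le_two_rpow_mul (n : ℕ) {R : ℝ} (hR : 0 ≤ R) : (1 : ℝ) ≤ 2 ^ ((n : ℝ) * R) :=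
  Real.one_le_rpow one_le_two (by positivity)

lemma msgSize_pos (n : ℕ) {R : ℝ} (hR : 0 ≤ R) : 0 < msgSize n R :=
  Nat.floor_pos.2 (one_le_two_rpow_mul n hR)

lemma rpow_le_two_mul_msgSize (n : ℕ) {R : ℝ} (hR : 0 ≤ R) :
    (2 : ℝ) ^ ((n : ℝ) * R) ≤ 2 * msgSize n R := by
  have h1 : (1 : ℝ) ≤ msgSize n R := by exact_mod_cast msgSize_pos n hR
  have h2 : (2 : ℝ) ^ ((n : ℝ) * R) < msgSize n R + 1 := Nat.lt_floor_add_one _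
  linarith

lemma two_rpow_mul_add (n : ℕ) (a b : ℝ) :
    (2 : ℝ) ^ ((n : ℝ) * (a + b)) = 2 ^ ((n : ℝ) * a) * 2 ^ ((n : ℝ) * b) := by
  rw [mul_add, Real.rpow_add two_pos]

lemma eventually_four_mul_msgSize_mul_le {a b c : ℝ} (hc : 0 ≤ c) (habc : a + b < c) :
    ∀ᶠ n in atTop, 4 * (msgSize n a * msgSize n b) ≤ msgSize n c := by
  have hgap : ∀ᶠ n : ℕ in atTop, 3 ≤ (n : ℝ) * (c - a - b) :=
    (tendsto_natCast_atTop_atTop.atTop_mul_const (by linarith)).eventually_ge_atTop 3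
  filter_upwards [hgap] with n hn
  have hab : (msgSize n a * msgSize n b : ℝ) ≤ 2 ^ ((n : ℝ) * (a + b)) := by
    rw [two_rpow_mul_add]
    exact mul_le_mul (msgSize_le_rpow n a) (msgSize_le_rpow n b) (by positivity) (by positivity)
  have h8 : 8 * (2 : ℝ) ^ ((n : ℝ) * (a + b)) ≤ 2 ^ ((n : ℝ) * c) := by
    calc 8 * (2 : ℝ) ^ ((n : ℝ) * (a + b)) = 2 ^ (3 + (n : ℝ) * (a + b)) := by
          rw [Real.rpow_add two_pos]; norm_num
      _ ≤ 2 ^ ((n : ℝ) * c) := Real.rpow_le_rpow_of_exponent_le one_le_two (by linarith)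
  have := rpow_le_two_mul_msgSize n hc
  exact_mod_cast (by linarith : (4 * (msgSize n a * msgSize n b) : ℝ) ≤ msgSize n c)

end MsgSize

lemma MAC.W_le_one (M : MAC X1 X2 Y) (x1 : X1) (x2 : X2) (y : Y) : M.W x1 x2 y ≤ 1 :=
  M.sum_one x1 x2 ▸ single_le_sum (fun y _ => M.nonneg x1 x2 y) (mem_univ y)

namespace Code

variable {M : MAC X1 X2 Y} {n : ℕ} {R1 R2 c1 c2 d1 d2 : ℝ}

/-- `p(yⁿ | x₁ⁿ, x₂ⁿ)` for the inputs the code sends on the message pair `(w₁, w₂)`. -/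
def transProb (C : Code M n R1 R2 c1 c2 d1 d2) (w1 : Fin (msgSize n R1))
    (w2 : Fin (msgSize n R2)) (y : Fin n → Y) : ℝ :=
  ∏ t, M.W (C.f1 w1 (C.cf1 (C.toCF1 w1) (C.toCF2 w2)) t)
    (C.f2 w2 (C.cf2 (C.toCF1 w1) (C.toCF2 w2)) t) (y t)

variable (C : Code M n R1 R2 c1 c2 d1 d2)

lemma errProb_eq (w1 : Fin (msgSize n R1)) (w2 : Fin (msgSize n R2)) :
    errProb C w1 w2 = ∑ y, if C.dec y ≠ (w1, w2) then C.transProb w1 w2 y else 0 := rfl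

lemma transProb_nonneg (w1 w2) (y : Fin n → Y) : 0 ≤ C.transProb w1 w2 y :=
  prod_nonneg fun _ _ => M.nonneg _ _ _

lemma transProb_le_one (w1 w2) (y : Fin n → Y) : C.transProb w1 w2 y ≤ 1 :=
  prod_le_one (fun _ _ => M.nonneg _ _ _) fun _ _ => M.W_le_one _ _ _

lemma sum_transProb (w1 w2) : ∑ y, C.transProb w1 w2 y = 1 := by
  classical
  simp only [transProb, ← Fintype.prod_sum, M.sum_one, prod_const_one]

lemma errProb_nonneg (w1 w2) : 0 ≤ errProb C w1 w2 :=
  sum_nonneg fun y _ => ite_nonneg (C.transProb_nonneg w1 w2 y) le_rfl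

lemma avgErr_nonneg : 0 ≤ avgErr C :=
  mul_nonneg (by positivity) (sum_nonneg fun _ _ => sum_nonneg fun _ _ => C.errProb_nonneg _ _)

lemma errProb_eq_one_sub (w1 w2) :
    errProb C w1 w2 = 1 - ∑ y, if C.dec y = (w1, w2) then C.transProb w1 w2 y else 0 := by
  rw [← C.sum_transProb w1 w2, errProb_eq, eq_sub_iff_add_eq, ← sum_add_distrib]
  exact sum_congr rfl fun y _ => by split_ifs <;> simp_all

/-- Every output sequence is decoded to a single message pair, so the probabilities of correct
decoding sum to at most `|Y|ⁿ`. -/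
lemma card_mul_card_sub_le_sum_errProb :
    (msgSize n R1 * msgSize n R2 : ℝ) - Fintype.card Y ^ n ≤
      ∑ w1, ∑ w2, errProb C w1 w2 := by
  classical
  have hcorrect : ∑ w1, ∑ w2, ∑ y, (if C.dec y = (w1, w2) then C.transProb w1 w2 y else 0)
      ≤ (Fintype.card Y : ℝ) ^ n :=
    calc _ = ∑ y, C.transProb (C.dec y).1 (C.dec y).2 y := by
          rw [← Fintype.sum_prod_type', sum_comm]
          simp [eq_comm]
      _ ≤ ∑ _y : Fin n → Y, (1 : ℝ) := sum_le_sum fun y _ => C.transProb_le_one _ _ y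
      _ = Fintype.card Y ^ n := by simp
  simp only [errProb_eq_one_sub, sum_sub_distrib, sum_const, card_univ, Fintype.card_fin,
    nsmul_eq_mul, mul_one]
  linarith

lemma one_div_four_sub_le_avgErr (hR1 : 0 ≤ R1) (hR2 : 0 ≤ R2) :
    1 / 4 - Fintype.card Y ^ n / (2 : ℝ) ^ ((n : ℝ) * (R1 + R2)) ≤ avgErr C := by
  have hT : (2 : ℝ) ^ ((n : ℝ) * (R1 + R2)) ≤ 4 * (msgSize n R1 * msgSize n R2) := by
    rw [two_rpow_mul_add]
    nlinarith [rpow_le_two_mul_msgSize n hR1, rpow_le_two_mul_msgSize n hR2,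
      one_le_two_rpow_mul n hR1, one_le_two_rpow_mul n hR2]
  have hpos : (0 : ℝ) < 2 ^ ((n : ℝ) * (R1 + R2)) := by positivity
  rw [avgErr, one_div_mul_eq_div, le_div_iff₀ hpos, sub_mul, div_mul_cancel₀ _ hpos.ne']
  linarith [C.card_mul_card_sub_le_sum_errProb]

end Code

section SumRate

variable {M : MAC X1 X2 Y} {c1 c2 d1 d2 : ℝ}

lemma AchievableAvg.two_rpow_add_le_card {R : ℝ × ℝ} (h : AchievableAvg M c1 c2 d1 d2 R) :
    (2 : ℝ) ^ (R.1 + R.2) ≤ Fintype.card Y := by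
  obtain ⟨hR1, hR2, C, hC⟩ := h
  by_contra! hlt
  set q : ℝ := Fintype.card Y / 2 ^ (R.1 + R.2)
  have hq1 : q < 1 := (div_lt_one (by positivity)).2 hlt
  have hlower : ∀ n : ℕ, 1 / 4 - q ^ (n + 1) ≤ avgErr (C n) := fun n => by
    convert (C n).one_div_four_sub_le_avgErr hR1 hR2 using 2
    rw [div_pow, ← Real.rpow_natCast (2 ^ _), ← Real.rpow_mul zero_le_two, mul_comm]
  have hlim : Tendsto (fun n : ℕ => 1 / 4 - q ^ (n + 1)) atTop (𝓝 (1 / 4 - 0)) :=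
    ((tendsto_pow_atTop_nhds_zero_of_lt_one (by positivity) hq1).comp
      (tendsto_add_atTop_nat 1)).const_sub _
  linarith [le_of_tendsto_of_tendsto' hlim hC hlower]

lemma AchievableAvg.add_le_logb_card {R : ℝ × ℝ} (h : AchievableAvg M c1 c2 d1 d2 R) :
    R.1 + R.2 ≤ Real.logb 2 (Fintype.card Y) := by
  have hle := h.two_rpow_add_le_card
  exact (Real.le_logb_iff_rpow_le one_lt_two (lt_of_lt_of_le (by positivity) hle)).2 hle

lemma fst_add_snd_le_of_mem_closure {A : Set (ℝ × ℝ)} {b : ℝ}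
    (h : ∀ R ∈ A, R.1 + R.2 ≤ b) {R : ℝ × ℝ} (hR : R ∈ closure A) : R.1 + R.2 ≤ b :=
  closure_minimal h (isClosed_le (continuous_fst.add continuous_snd) continuous_const) hR

lemma csumAvg_nonneg (Cin Cout : ℝ × ℝ) : 0 ≤ CsumAvg M Cin Cout := by
  refine Real.sSup_nonneg ?_
  rintro _ ⟨R, hR, rfl⟩
  refine closure_minimal (fun R' hR' => ?_)
    (isClosed_le continuous_const (continuous_fst.add continuous_snd)) hR
  exact add_nonneg hR'.1 hR'.2.1

lemma csumAvg_le {Cin Cout : ℝ × ℝ} {b : ℝ} (hb : 0 ≤ b)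
    (h : ∀ R, AchievableAvg M Cin.1 Cin.2 Cout.1 Cout.2 R → R.1 + R.2 ≤ b) :
    CsumAvg M Cin Cout ≤ b := by
  refine Real.sSup_le ?_ hb
  rintro _ ⟨R, hR, rfl⟩
  exact fst_add_snd_le_of_mem_closure h hR

lemma fst_add_snd_le_csumAvg_of_mem_closure {Cin Cout : ℝ × ℝ} {R : ℝ × ℝ}
    (hR : R ∈ closure {R | AchievableAvg M Cin.1 Cin.2 Cout.1 Cout.2 R}) :
    R.1 + R.2 ≤ CsumAvg M Cin Cout := by
  refine le_csSup ⟨Real.logb 2 (Fintype.card Y), ?_⟩ ⟨R, hR, rfl⟩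
  rintro _ ⟨R', hR', rfl⟩
  exact fst_add_snd_le_of_mem_closure (fun _ hR'' => AchievableAvg.add_le_logb_card hR'') hR'

lemma AchievableAvg.add_le_csumAvg {Cin Cout R : ℝ × ℝ}
    (h : AchievableAvg M Cin.1 Cin.2 Cout.1 Cout.2 R) : R.1 + R.2 ≤ CsumAvg M Cin Cout :=
  fst_add_snd_le_csumAvg_of_mem_closure (subset_closure h)

lemma csumAvg_mono {Cin Cout Cin' Cout' : ℝ × ℝ}
    (h : ∀ R, AchievableAvg M Cin.1 Cin.2 Cout.1 Cout.2 R →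
      AchievableAvg M Cin'.1 Cin'.2 Cout'.1 Cout'.2 R) :
    CsumAvg M Cin Cout ≤ CsumAvg M Cin' Cout' := by
  refine Real.sSup_le ?_ (csumAvg_nonneg _ _)
  rintro _ ⟨R, hR, rfl⟩
  exact fst_add_snd_le_csumAvg_of_mem_closure (closure_mono (fun R' => h R') hR)

end SumRate

namespace Code

variable {M : MAC X1 X2 Y} {n : ℕ} {R1 R2 c1 c2 d1 d2 : ℝ}

def withCF (C : Code M n R1 R2 0 0 0 0) (hc1 : 0 ≤ c1) (hc2 : 0 ≤ c2) (hd1 : 0 ≤ d1)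
    (hd2 : 0 ≤ d2) : Code M n R1 R2 c1 c2 d1 d2 where
  toCF1 _ := ⟨0, msgSize_pos n hc1⟩
  toCF2 _ := ⟨0, msgSize_pos n hc2⟩
  cf1 _ _ := ⟨0, msgSize_pos n hd1⟩
  cf2 _ _ := ⟨0, msgSize_pos n hd2⟩
  f1 w1 _ := C.f1 w1 default
  f2 w2 _ := C.f2 w2 default
  dec := C.dec

lemma errProb_withCF (C : Code M n R1 R2 0 0 0 0) (hc1 : 0 ≤ c1) (hc2 : 0 ≤ c2) (hd1 : 0 ≤ d1)
    (hd2 : 0 ≤ d2) (w1 w2) : errProb (C.withCF hc1 hc2 hd1 hd2) w1 w2 = errProb C w1 w2 := by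
  simp only [errProb, withCF]
  congr! <;> exact Subsingleton.elim _ _

lemma avgErr_withCF (C : Code M n R1 R2 0 0 0 0) (hc1 : 0 ≤ c1) (hc2 : 0 ≤ c2) (hd1 : 0 ≤ d1)
    (hd2 : 0 ≤ d2) : avgErr (C.withCF hc1 hc2 hd1 hd2) = avgErr C := by
  simp only [avgErr, errProb_withCF]

lemma nonempty_of_nonneg [Nonempty X1] [Nonempty X2] (hR1 : 0 ≤ R1) (hR2 : 0 ≤ R2)
    (hc1 : 0 ≤ c1) (hc2 : 0 ≤ c2) (hd1 : 0 ≤ d1) (hd2 : 0 ≤ d2) :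
    Nonempty (Code M n R1 R2 c1 c2 d1 d2) :=
  ⟨{ toCF1 := fun _ => ⟨0, msgSize_pos n hc1⟩
     toCF2 := fun _ => ⟨0, msgSize_pos n hc2⟩
     cf1 := fun _ _ => ⟨0, msgSize_pos n hd1⟩
     cf2 := fun _ _ => ⟨0, msgSize_pos n hd2⟩
     f1 := fun _ _ _ => Classical.arbitrary X1
     f2 := fun _ _ _ => Classical.arbitrary X2
     dec := fun _ => (⟨0, msgSize_pos n hR1⟩, ⟨0, msgSize_pos n hR2⟩) }⟩

lemma nonempty_inputs (C : Code M (n + 1) R1 R2 c1 c2 d1 d2) (hR1 : 0 ≤ R1) (hR2 : 0 ≤ R2) :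
    Nonempty X1 ∧ Nonempty X2 :=
  let w1 : Fin (msgSize (n + 1) R1) := ⟨0, msgSize_pos _ hR1⟩
  let w2 : Fin (msgSize (n + 1) R2) := ⟨0, msgSize_pos _ hR2⟩
  ⟨⟨C.f1 w1 (C.cf1 (C.toCF1 w1) (C.toCF2 w2)) 0⟩,
    ⟨C.f2 w2 (C.cf2 (C.toCF1 w1) (C.toCF2 w2)) 0⟩⟩

section Restrict

variable {R1' : ℝ} [Nonempty (Fin (msgSize n R1'))]

/-- Encoder 1, restricted to the sub-codebook `ι`, computes its own facilitator message and
encoder 2 gets the fixed message `z2`; this copies `C` on `ι` when the facilitator sends `z2` to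
encoder 2 for every message of `ι`. -/
noncomputable def restrict (C : Code M n R1 R2 c1 0 d1 d2)
    (ι : Fin (msgSize n R1') → Fin (msgSize n R1)) (z2 : Fin (msgSize n d2)) :
    Code M n R1' R2 0 0 0 0 where
  toCF1 _ := default
  toCF2 _ := default
  cf1 _ _ := default
  cf2 _ _ := default
  f1 i _ := C.f1 (ι i) (C.cf1 (C.toCF1 (ι i)) default)
  f2 w2 _ := C.f2 w2 z2
  dec y := (Function.invFun ι (C.dec y).1, (C.dec y).2)

lemma errProb_restrict_le (C : Code M n R1 R2 c1 0 d1 d2)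
    {ι : Fin (msgSize n R1') → Fin (msgSize n R1)} (hι : Function.Injective ι)
    {z2 : Fin (msgSize n d2)} (hz2 : ∀ i, C.cf2 (C.toCF1 (ι i)) default = z2) (i w2) :
    errProb (C.restrict ι z2) i w2 ≤ errProb C (ι i) w2 := by
  have htrans : (C.restrict ι z2).transProb i w2 = C.transProb (ι i) w2 := by
    funext y
    simp only [transProb, restrict]
    rw [Subsingleton.elim (C.toCF2 w2) default, hz2]
  rw [errProb_eq, errProb_eq, htrans]
  refine sum_le_sum fun y _ => ?_
  by_cases hdec : C.dec y = (ι i, w2)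
  · have : (C.restrict ι z2).dec y = (i, w2) := by
      simp [restrict, hdec, Function.leftInverse_invFun hι i]
    simp [hdec, this]
  · rw [if_pos hdec]
    split_ifs
    exacts [le_rfl, C.transProb_nonneg _ _ y]

end Restrict

end Code

section Expurgation

variable {α β : Type*} [Fintype α]

lemma four_mul_card_filter_lt_le_card (e : α → ℝ) (he : ∀ a, 0 ≤ e a) :
    4 * #{a | 4 * ∑ b, e b < Fintype.card α * e a} ≤ Fintype.card α := by
  set N := Fintype.card α
  set E := ∑ b, e b
  set bad := ({a | 4 * E < N * e a} : Finset α)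
  have hbad : #bad * (4 * E) ≤ N * E :=
    calc #bad * (4 * E) ≤ ∑ a ∈ bad, N * e a := by
          simpa using card_nsmul_le_sum bad _ _ fun a ha => (mem_filter.1 ha).2.le
      _ ≤ ∑ a, N * e a := sum_le_sum_of_subset_of_nonneg (subset_univ _) fun a _ _ =>
          mul_nonneg N.cast_nonneg (he a)
      _ = N * E := by rw [mul_sum]
  have hE0 : 0 ≤ E := sum_nonneg fun a _ => he a
  rcases hE0.eq_or_lt with hE | hE
  · suffices bad = ∅ by simp [this]
    refine filter_false_of_mem fun a _ => ?_
    rw [(sum_eq_zero_iff_of_nonneg fun b _ => he b).1 hE.symm a (mem_univ a)]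
    linarith
  · exact_mod_cast le_of_mul_le_mul_right (by linarith : (4 * #bad : ℝ) * E ≤ N * E) hE

/-- Markov's inequality keeps three quarters of `α`; pigeonhole over `f(α)` finds the fiber. -/
lemma exists_large_fiber_subset_le_four_mul_sum [Nonempty α] [DecidableEq β] (f : α → β)
    {e : α → ℝ} (he : ∀ a, 0 ≤ e a) {m : ℕ}
    (hm : 4 * (#(univ.image f) * m) ≤ Fintype.card α) :
    ∃ S : Finset α, m ≤ #S ∧ (∃ b, ∀ a ∈ S, f a = b) ∧
      ∀ a ∈ S, Fintype.card α * e a ≤ 4 * ∑ b, e b := by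
  have hgood : #(univ.image f) * m ≤ #{a | ¬ 4 * ∑ b, e b < Fintype.card α * e a} := by
    have hsplit := card_filter_add_card_filter_not (s := univ)
      fun a => 4 * ∑ b, e b < Fintype.card α * e a
    have := four_mul_card_filter_lt_le_card e he
    rw [card_univ] at hsplit
    omega
  obtain ⟨b, -, hb⟩ := exists_le_card_fiber_of_mul_le_card_of_maps_to
    (fun a _ => mem_image_of_mem f (mem_univ a)) (univ_nonempty.image f) hgood
  exact ⟨_, hb, ⟨b, fun a ha => (mem_filter.1 ha).2⟩,
    fun a ha => not_lt.1 (mem_filter.1 (mem_filter.1 ha).1).2⟩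

end Expurgation

namespace Code

variable {M : MAC X1 X2 Y} {n : ℕ} {R1 R2 c1 d1 d2 R1' : ℝ}

/-- The factor `8 = 4 · 2` comes from `hgood` and from `2^{nR₁} ≤ 2 ⌊2^{nR₁}⌋`. -/
lemma exists_noCF_avgErr_le_eight_mul (C : Code M n R1 R2 c1 0 d1 d2) (hR1 : 0 ≤ R1)
    (hR1' : 0 ≤ R1') {S : Finset (Fin (msgSize n R1))} (hS : msgSize n R1' ≤ #S)
    (hfiber : ∃ z2, ∀ w ∈ S, C.cf2 (C.toCF1 w) default = z2)
    (hgood : ∀ w ∈ S,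
      msgSize n R1 * ∑ w2, errProb C w w2 ≤ 4 * ∑ w1, ∑ w2, errProb C w1 w2) :
    ∃ D : Code M n R1' R2 0 0 0 0, avgErr D ≤ 8 * avgErr C := by
  obtain ⟨z2, hz2⟩ := hfiber
  have : Nonempty (Fin (msgSize n R1')) := Fin.pos_iff_nonempty.1 (msgSize_pos n hR1')
  let ι : Fin (msgSize n R1') ↪ S := (Fin.castLEEmb hS).trans S.equivFin.symm.toEmbedding
  have hι : Function.Injective fun i => (ι i : Fin (msgSize n R1)) :=
    Subtype.val_injective.comp ι.injective
  set D := C.restrict (fun i => (ι i : Fin (msgSize n R1))) z2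
  set E := ∑ w1, ∑ w2, errProb C w1 w2
  have hD : (msgSize n R1 : ℝ) * ∑ i, ∑ w2, errProb D i w2 ≤ msgSize n R1' * (4 * E) :=
    calc _ ≤ ∑ i, (msgSize n R1 : ℝ) * ∑ w2, errProb C (ι i) w2 := by
          rw [mul_sum]
          gcongr with i _ w2
          exact C.errProb_restrict_le hι (fun i => hz2 _ (ι i).2) i w2
      _ ≤ ∑ _i : Fin (msgSize n R1'), 4 * E := sum_le_sum fun i _ => hgood _ (ι i).2
      _ = msgSize n R1' * (4 * E) := by simp
  refine ⟨D, ?_⟩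
  have hE : 0 ≤ E := sum_nonneg fun _ _ => sum_nonneg fun _ _ => C.errProb_nonneg _ _
  have hSD : 0 ≤ ∑ i, ∑ w2, errProb D i w2 :=
    sum_nonneg fun i _ => sum_nonneg fun w2 _ => D.errProb_nonneg i w2
  have hDE :
      (∑ i, ∑ w2, errProb D i w2) * 2 ^ ((n : ℝ) * R1) ≤ 8 * E * 2 ^ ((n : ℝ) * R1') :=
    calc _ ≤ (∑ i, ∑ w2, errProb D i w2) * (2 * msgSize n R1) :=
          mul_le_mul_of_nonneg_left (rpow_le_two_mul_msgSize n hR1) hSD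
      _ ≤ 2 * (msgSize n R1' * (4 * E)) := by linarith
      _ ≤ 8 * E * 2 ^ ((n : ℝ) * R1') := by nlinarith [msgSize_le_rpow n R1']
  rw [avgErr, avgErr, two_rpow_mul_add, two_rpow_mul_add, one_div_mul_eq_div, one_div_mul_eq_div,
    ← mul_div_assoc, div_le_div_iff₀ (by positivity) (by positivity)]
  nlinarith [show (0 : ℝ) < 2 ^ ((n : ℝ) * R2) by positivity]

end Code

namespace AchievableAvg

variable {M : MAC X1 X2 Y} {c1 c2 d1 d2 : ℝ}

lemma of_eventually_avgErr_le {R : ℝ × ℝ} (hR1 : 0 ≤ R.1) (hR2 : 0 ≤ R.2)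
    (hne : ∀ n, Nonempty (Code M (n + 1) R.1 R.2 c1 c2 d1 d2)) {ε : ℕ → ℝ}
    (hε : Tendsto ε atTop (𝓝 0))
    (h : ∀ᶠ n in atTop, ∃ D : Code M (n + 1) R.1 R.2 c1 c2 d1 d2, avgErr D ≤ ε n) :
    AchievableAvg M c1 c2 d1 d2 R := by
  classical
  let D n : Code M (n + 1) R.1 R.2 c1 c2 d1 d2 :=
    if hn : ∃ D : Code M (n + 1) R.1 R.2 c1 c2 d1 d2, avgErr D ≤ ε n then hn.choose
    else (hne n).some
  refine ⟨hR1, hR2, D, squeeze_zero' (.of_forall fun n => (D n).avgErr_nonneg) ?_ hε⟩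
  filter_upwards [h] with n hn
  simpa only [D, dif_pos hn] using hn.choose_spec

lemma withCF {R : ℝ × ℝ} (h : AchievableAvg M 0 0 0 0 R) (hc1 : 0 ≤ c1) (hc2 : 0 ≤ c2)
    (hd1 : 0 ≤ d1) (hd2 : 0 ≤ d2) : AchievableAvg M c1 c2 d1 d2 R := by
  obtain ⟨hR1, hR2, C, hC⟩ := h
  exact ⟨hR1, hR2, fun n => (C n).withCF hc1 hc2 hd1 hd2, by simpa only [Code.avgErr_withCF]⟩

lemma noCF_of_add_min_lt {R : ℝ × ℝ} (h : AchievableAvg M c1 0 d1 d2 R) {R1' : ℝ}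
    (hR1' : 0 ≤ R1') (hlt : R1' + min c1 d2 < R.1) :
    AchievableAvg M 0 0 0 0 (R1', R.2) := by
  obtain ⟨hR1, hR2, C, hC⟩ := h
  obtain ⟨_, _⟩ := (C 0).nonempty_inputs hR1 hR2
  refine of_eventually_avgErr_le hR1' hR2
    (fun n => Code.nonempty_of_nonneg hR1' hR2 le_rfl le_rfl le_rfl le_rfl)
    (by simpa using hC.const_mul 8) ?_
  filter_upwards [(tendsto_add_atTop_nat 1).eventually
    (eventually_four_mul_msgSize_mul_le hR1 (by linarith : min c1 d2 + R1' < R.1))] with n hn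
  have : Nonempty (Fin (msgSize (n + 1) R.1)) := Fin.pos_iff_nonempty.1 (msgSize_pos _ hR1)
  set f := fun w => (C n).cf2 ((C n).toCF1 w) default
  have hK : #(univ.image f) ≤ msgSize (n + 1) (min c1 d2) := by
    rw [(msgSize_mono _).map_min]
    refine le_min ?_ ((card_le_univ _).trans (Fintype.card_fin _).le)
    calc #(univ.image f) ≤ #((univ.image (C n).toCF1).image fun z => (C n).cf2 z default) := by
          rw [image_image]; rfl
      _ ≤ #(univ.image (C n).toCF1) := card_image_le
      _ ≤ msgSize (n + 1) c1 := (card_le_univ _).trans (Fintype.card_fin _).le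
  obtain ⟨S, hS, hfiber, hgood⟩ := exists_large_fiber_subset_le_four_mul_sum f
    (fun w => sum_nonneg fun w2 _ => (C n).errProb_nonneg w w2) (m := msgSize (n + 1) R1')
    (by rw [Fintype.card_fin]; exact le_trans (by gcongr) hn)
  exact (C n).exists_noCF_avgErr_le_eight_mul hR1 hR1' hS hfiber (by simpa using hgood)

lemma noCF_zero {R : ℝ × ℝ} (h : AchievableAvg M c1 0 d1 d2 R) :
    AchievableAvg M 0 0 0 0 (0, R.2) := by
  obtain ⟨hR1, hR2, C, hC⟩ := h
  have hD : ∀ n, ∃ D : Code M (n + 1) 0 R.2 0 0 0 0, avgErr D ≤ 8 * avgErr (C n) := by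
    intro n
    have : Nonempty (Fin (msgSize (n + 1) R.1)) := Fin.pos_iff_nonempty.1 (msgSize_pos _ hR1)
    have hE : 0 ≤ ∑ w1, ∑ w2, errProb (C n) w1 w2 :=
      sum_nonneg fun w1 _ => sum_nonneg fun w2 _ => (C n).errProb_nonneg w1 w2
    obtain ⟨w, -, hw⟩ := exists_le_of_sum_le
      (f := fun w => (msgSize (n + 1) R.1 : ℝ) * ∑ w2, errProb (C n) w w2)
      (g := fun _ => ∑ w1, ∑ w2, errProb (C n) w1 w2) univ_nonempty (by simp [mul_sum])
    exact (C n).exists_noCF_avgErr_le_eight_mul hR1 le_rfl (S := {w}) (by simp [msgSize_zero])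
      ⟨_, fun w' hw' => by rw [mem_singleton.1 hw']⟩
      (fun w' hw' => by rw [mem_singleton.1 hw']; linarith)
  choose D hD using hD
  exact ⟨le_rfl, hR2, D, squeeze_zero (fun n => (D n).avgErr_nonneg) hD
    (by simpa using hC.const_mul 8)⟩

end AchievableAvg

section SumCapacity

variable {M : MAC X1 X2 Y}

theorem csumAvg_le_csumAvg_zero_add_min {c1 d1 d2 : ℝ} (hc1 : 0 ≤ c1) (hd2 : 0 ≤ d2) :
    CsumAvg M (c1, 0) (d1, d2) ≤ CsumAvg M (0, 0) (0, 0) + min c1 d2 := by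
  refine csumAvg_le (add_nonneg (csumAvg_nonneg _ _) (le_min hc1 hd2)) fun R hR => ?_
  refine le_of_forall_pos_le_add fun η hη => ?_
  rcases le_or_gt (min c1 d2 + η) R.1 with hlarge | hsmall
  · have := (hR.noCF_of_add_min_lt (R1' := R.1 - (min c1 d2 + η)) (by linarith)
      (by linarith)).add_le_csumAvg (Cin := (0, 0)) (Cout := (0, 0))
    dsimp only at this
    linarith
  · have := hR.noCF_zero.add_le_csumAvg (Cin := (0, 0)) (Cout := (0, 0))
    dsimp only at this
    linarith

theorem continuousWithinAt_csumAvg_zero {c1 : ℝ} (hc1 : 0 ≤ c1) :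
    ContinuousWithinAt (fun d2 : ℝ => CsumAvg M (c1, 0) (0, d2)) (Set.Ici 0) 0 := by
  have hlower : ∀ d2 ∈ Set.Ici (0 : ℝ),
      CsumAvg M (0, 0) (0, 0) ≤ CsumAvg M (c1, 0) (0, d2) :=
    fun _ hd2 => csumAvg_mono fun _ hR => hR.withCF hc1 le_rfl le_rfl hd2
  have hupper : ∀ d2 ∈ Set.Ici (0 : ℝ),
      CsumAvg M (c1, 0) (0, d2) ≤ CsumAvg M (0, 0) (0, 0) + d2 := fun _ hd2 =>
    (csumAvg_le_csumAvg_zero_add_min hc1 hd2).trans (by gcongr; exact min_le_right _ _)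
  have h0 : CsumAvg M (c1, 0) (0, 0) = CsumAvg M (0, 0) (0, 0) :=
    le_antisymm (by simpa using hupper 0 Set.self_mem_Ici) (hlower 0 Set.self_mem_Ici)
  rw [ContinuousWithinAt, h0]
  refine tendsto_of_tendsto_of_tendsto_of_le_of_le' tendsto_const_nhds ?_
    (eventually_nhdsWithin_of_forall hlower) (eventually_nhdsWithin_of_forall hupper)
  exact ((continuous_const_add _).tendsto' 0 _ (add_zero _)).mono_left nhdsWithin_le_nhds

end SumCapacity

/-- For any discrete memoryless MAC, any `C_in¹ ≥ 0`, and any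
`C_out ∈ ℝ²_{≥0}`,
`C_sum,avg((C_in¹,0), C_out) ≤ C_sum,avg((0,0),(0,0)) + min{C_in¹, C_out²}`; consequently
`C_out² ↦ C_sum,avg((C_in¹,0),(0,C_out²))` is continuous at `C_out² = 0` (from within
`ℝ_{≥0}`). -/
theorem csumAvg_oneSided_bound_and_continuity
    {X1 X2 Y : Type} [Fintype X1] [Fintype X2] [Fintype Y]
    (M : MAC X1 X2 Y) (c1 : ℝ) (hc1 : 0 ≤ c1) :
    (∀ Cout : ℝ × ℝ, 0 ≤ Cout.1 → 0 ≤ Cout.2 →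
      CsumAvg M (c1, 0) Cout ≤ CsumAvg M (0, 0) (0, 0) + min c1 Cout.2) ∧
    ContinuousWithinAt (fun d2 : ℝ => CsumAvg M (c1, 0) (0, d2)) (Set.Ici 0) 0 :=
  ⟨fun _ _ hd2 => csumAvg_le_csumAvg_zero_add_min hc1 hd2, continuousWithinAt_csumAvg_zero hc1⟩
end
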